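/- arXiv:2010.10114 — 2 statements merged into one kernel-verified Lean document; each statement's English description precedes it below -/
import Mathlib

section
/- The pure braid group PBr₃ = ker ρ equals the subgroup of Br₃ generated (as a subgroup, i.e. Subgroup.closure) by the three elements a², b², and (a·b·a)². -/
/-!
Put `Δ = a·b·a` and `H = ⟨a², b², Δ²⟩`. The braid relation makes `Δ²` central and gives
`(b²·a)² = Δ² = (a²·b)²`, so conjugating `a²`, `b²`, `Δ²` by `a^{±1}` or `b^{±1}` stays in `H`,
and `H` is normal. In `Br₃ ⧸ H` the images of `a` and `b` are involutions satisfying the braid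
relation, so every element is one of `1, a, b, ab, ba, aba`: `H` has index at most `6`.
Since `H ≤ ker ρ` and `ρ` is onto `Sym₃`, of order `6`, the two subgroups coincide.
-/

/-- The single braid relation `a·b·a·(b·a·b)⁻¹` on two generators. -/
def braidRels : Set (FreeGroup (Fin 2)) :=
  {FreeGroup.of 0 * FreeGroup.of 1 * FreeGroup.of 0 *
    (FreeGroup.of 1 * FreeGroup.of 0 * FreeGroup.of 1)⁻¹}

/-- The braid group on three strings, `Br₃ = ⟨a, b | a·b·a = b·a·b⟩`. -/
abbrev Br3 : Type := PresentedGroup braidRels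

/-- The first generator `a` of `Br₃`. -/
def braidA : Br3 := PresentedGroup.of 0

/-- The second generator `b` of `Br₃`. -/
def braidB : Br3 := PresentedGroup.of 1

/-- The images `σ = (swap 0 1, swap 1 2)` of the generators in `Sym₃`. -/
def braidSigma : Fin 2 → Equiv.Perm (Fin 3) := ![Equiv.swap 0 1, Equiv.swap 1 2]

theorem braidRels_hold : ∀ r ∈ braidRels, FreeGroup.lift braidSigma r = 1 := by
  intro r hr
  rw [braidRels, Set.mem_singleton_iff] at hr
  subst hr
  simp only [map_mul, map_inv, FreeGroup.lift_apply_of, braidSigma, Matrix.cons_val_zero,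
    Matrix.cons_val_one, Matrix.head_cons]
  decide

/-- The natural homomorphism `ρ : Br₃ → Sym₃` sending `a ↦ (0 1)` and `b ↦ (1 2)`. -/
def braidRho : Br3 →* Equiv.Perm (Fin 3) := PresentedGroup.toGroup braidRels_hold

namespace Subgroup

variable {G : Type*} [Group G]

theorem conj_mem_closure_of_forall_conj_mem {S : Set G} {g : G}
    (hS : ∀ s ∈ S, g * s * g⁻¹ ∈ closure S) {h : G} (hh : h ∈ closure S) :
    g * h * g⁻¹ ∈ closure S :=
  (closure_le ((closure S).comap (MulAut.conj g).toMonoidHom)).2 hS hh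

theorem normal_closure_of_forall_conj_mem {S T : Set G} (hT : closure T = ⊤)
    (hS : ∀ t ∈ T, ∀ s ∈ S, t * s * t⁻¹ ∈ closure S ∧ t⁻¹ * s * t ∈ closure S) :
    (closure S).Normal := by
  rw [← normalizer_eq_top_iff, eq_top_iff, ← hT, closure_le]
  intro t ht h
  refine ⟨conj_mem_closure_of_forall_conj_mem fun s hs ↦ (hS t ht s hs).1, fun hconj ↦ ?_⟩
  have := conj_mem_closure_of_forall_conj_mem (g := t⁻¹)
    (fun s hs ↦ by simpa using (hS t ht s hs).2) hconj
  simpa [mul_assoc] using this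

theorem eq_of_le_of_index_le {H K : Subgroup G} [H.FiniteIndex] (hHK : H ≤ K)
    (hidx : H.index ≤ K.index) : H = K :=
  hHK.eq_of_not_lt fun hlt ↦ (index_strictAnti hlt).not_ge hidx

end Subgroup

open Subgroup

section BraidRelation

variable {G : Type*} [Group G]

def braidSquares (x y : G) : Set G := {x ^ 2, y ^ 2, (x * y * x) ^ 2}

variable {x y : G}

theorem braidSquares_comm (h : x * y * x = y * x * y) :
    braidSquares y x = braidSquares x y := by
  rw [braidSquares, braidSquares, ← h, Set.insert_comm]

theorem sq_mul_mul_sq_mul_eq_of_braid (h : x * y * x = y * x * y) :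
    y ^ 2 * x * (y ^ 2 * x) = (x * y * x) ^ 2 :=
  calc y ^ 2 * x * (y ^ 2 * x) = y * (y * x * y) * (y * x) := by simp only [sq]; group
    _ = y * (x * y * x) * (y * x) := by rw [h]
    _ = (y * x * y) * (x * y * x) := by group
    _ = (x * y * x) ^ 2 := by rw [← h, sq]

theorem commute_braid_sq (h : x * y * x = y * x * y) : Commute ((x * y * x) ^ 2) x :=
  calc (x * y * x) ^ 2 * x = (x * y * x) * (y * x * y) * x := by rw [sq, ← h]
    _ = x * ((y * x * y) * (x * y * x)) := by group
    _ = x * (x * y * x) ^ 2 := by rw [← h, sq]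

theorem conj_sq_eq_of_braid (h : x * y * x = y * x * y) :
    x * y ^ 2 * x⁻¹ = (y ^ 2)⁻¹ * (x * y * x) ^ 2 * (x ^ 2)⁻¹ := by
  rw [← sq_mul_mul_sq_mul_eq_of_braid h]; group

theorem inv_conj_sq_eq_of_braid (h : x * y * x = y * x * y) :
    x⁻¹ * y ^ 2 * x = (x ^ 2)⁻¹ * (y ^ 2)⁻¹ * (x * y * x) ^ 2 := by
  rw [← sq_mul_mul_sq_mul_eq_of_braid h]; group

theorem conj_mem_closure_braidSquares (h : x * y * x = y * x * y) :
    ∀ s ∈ braidSquares x y, x * s * x⁻¹ ∈ closure (braidSquares x y) ∧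
      x⁻¹ * s * x ∈ closure (braidSquares x y) := by
  have hx : x ^ 2 ∈ closure (braidSquares x y) := subset_closure (by simp [braidSquares])
  have hy : y ^ 2 ∈ closure (braidSquares x y) := subset_closure (by simp [braidSquares])
  have hc : (x * y * x) ^ 2 ∈ closure (braidSquares x y) :=
    subset_closure (by simp [braidSquares])
  rintro s (rfl | rfl | rfl)
  · rw [(Commute.self_pow x 2).mul_inv_cancel, (Commute.self_pow x 2).inv_mul_cancel]
    exact ⟨hx, hx⟩
  · rw [conj_sq_eq_of_braid h, inv_conj_sq_eq_of_braid h]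
    exact ⟨mul_mem (mul_mem (inv_mem hy) hc) (inv_mem hx),
      mul_mem (mul_mem (inv_mem hx) (inv_mem hy)) hc⟩
  · rw [(commute_braid_sq h).symm.mul_inv_cancel, (commute_braid_sq h).symm.inv_mul_cancel]
    exact ⟨hc, hc⟩

theorem normal_closure_braidSquares (h : x * y * x = y * x * y)
    (hgen : closure {x, y} = ⊤) : (closure (braidSquares x y)).Normal := by
  refine normal_closure_of_forall_conj_mem hgen ?_
  rintro t (rfl | rfl)
  · exact conj_mem_closure_braidSquares h
  · rw [← braidSquares_comm h]
    exact conj_mem_closure_braidSquares h.symm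

theorem surjective_six_words_of_braid (h : x * y * x = y * x * y) (hgen : closure {x, y} = ⊤)
    (hx : x ^ 2 = 1) (hy : y ^ 2 = 1) :
    Function.Surjective (![1, x, y, x * y, y * x, x * y * x] : Fin 6 → G) := by
  set f : Fin 6 → G := ![1, x, y, x * y, y * x, x * y * x]
  have hxx : ∀ z, x * (x * z) = z := fun z ↦ by rw [← mul_assoc, ← sq, hx, one_mul]
  have hyxy : y * (x * y) = x * (y * x) := by simp only [← mul_assoc, h]
  have hmul : ∀ g ∈ Set.range f, ∀ s ∈ ({x, y} : Set G), g * s ∈ Set.range f := by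
    rw [sq] at hx hy
    rintro _ ⟨i, rfl⟩ s (rfl | rfl) <;> fin_cases i <;> simp [f, mul_assoc, hx, hy, hxx, hyxy]
  have hinv : ∀ s ∈ ({x, y} : Set G), s⁻¹ = s := by
    rintro s (rfl | rfl) <;> exact inv_eq_of_mul_eq_one_right (by rwa [← sq])
  intro g
  induction (hgen ▸ mem_top g : g ∈ closure {x, y}) using closure_induction_right with
  | one => exact ⟨0, rfl⟩
  | mul_right w _ s hs ih => exact hmul w ih s hs
  | mul_inv_cancel w _ s hs ih => rw [hinv s hs]; exact hmul w ih s hs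

theorem exists_surjective_fin_six_quotient_braidSquares (h : x * y * x = y * x * y)
    (hgen : closure {x, y} = ⊤) :
    ∃ f : Fin 6 → G ⧸ closure (braidSquares x y), Function.Surjective f := by
  have := normal_closure_braidSquares h hgen
  set π := QuotientGroup.mk' (closure (braidSquares x y))
  have hsq : ∀ g ∈ braidSquares x y, π g = 1 := fun g hg ↦
    (QuotientGroup.eq_one_iff g).2 (subset_closure hg)
  refine ⟨_, surjective_six_words_of_braid (x := π x) (y := π y) ?_ ?_ ?_ ?_⟩
  · simp only [← map_mul, h]
  · rw [← Set.image_pair, ← MonoidHom.map_closure, hgen,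
      map_top_of_surjective _ (QuotientGroup.mk'_surjective _)]
  · rw [← map_pow]; exact hsq _ (Or.inl rfl)
  · rw [← map_pow]; exact hsq _ (Or.inr (Or.inl rfl))

theorem finiteIndex_closure_braidSquares (h : x * y * x = y * x * y)
    (hgen : closure {x, y} = ⊤) : (closure (braidSquares x y)).FiniteIndex :=
  have ⟨_, hf⟩ := exists_surjective_fin_six_quotient_braidSquares h hgen
  have := Finite.of_surjective _ hf
  finiteIndex_of_finite_quotient

theorem index_closure_braidSquares_le (h : x * y * x = y * x * y)
    (hgen : closure {x, y} = ⊤) : (closure (braidSquares x y)).index ≤ 6 := by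
  obtain ⟨f, hf⟩ := exists_surjective_fin_six_quotient_braidSquares h hgen
  simpa [index_eq_card] using Nat.card_le_card_of_surjective f hf

end BraidRelation

theorem braidA_mul_braidB_mul_braidA : braidA * braidB * braidA = braidB * braidA * braidB :=
  PresentedGroup.mk_eq_mk_of_mul_inv_mem rfl

theorem closure_braidA_braidB : closure {braidA, braidB} = ⊤ := by
  convert PresentedGroup.closure_range_of braidRels
  ext
  simp [Fin.exists_fin_two, braidA, braidB, eq_comm]

theorem braidRho_braidA : braidRho braidA = Equiv.swap 0 1 := PresentedGroup.toGroup.of _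

theorem braidRho_braidB : braidRho braidB = Equiv.swap 1 2 := PresentedGroup.toGroup.of _

theorem braidRho_surjective : Function.Surjective braidRho := by
  rw [← MonoidHom.range_eq_top, eq_top_iff,
    ← closure_eq_top_of_mclosure_eq_top (Equiv.Perm.mclosure_swap_castSucc_succ 2), closure_le]
  rintro _ ⟨i, rfl⟩
  fin_cases i
  exacts [⟨braidA, braidRho_braidA⟩, ⟨braidB, braidRho_braidB⟩]

theorem index_ker_braidRho : braidRho.ker.index = 6 := by
  rw [index_ker, MonoidHom.range_eq_top_of_surjective _ braidRho_surjective, card_top,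
    Nat.card_perm, Nat.card_fin]
  rfl

theorem closure_braidSquares_le_ker : closure (braidSquares braidA braidB) ≤ braidRho.ker := by
  rw [closure_le]
  rintro _ (rfl | rfl | rfl) <;>
    simp only [SetLike.mem_coe, MonoidHom.mem_ker, map_pow, map_mul, braidRho_braidA,
      braidRho_braidB] <;>
    decide

/-- The pure braid group `PBr₃ = ker ρ` equals the subgroup of `Br₃` generated by the
three elements `a²`, `b²` and `(a·b·a)²`. -/
theorem ker_rho_eq_closure_second_triple :
    braidRho.ker =
      Subgroup.closure {braidA ^ 2, braidB ^ 2, (braidA * braidB * braidA) ^ 2} := by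
  have := finiteIndex_closure_braidSquares braidA_mul_braidB_mul_braidA closure_braidA_braidB
  refine (eq_of_le_of_index_le closure_braidSquares_le_ker ?_).symm
  rw [index_ker_braidRho]
  exact index_closure_braidSquares_le braidA_mul_braidB_mul_braidA closure_braidA_braidB
end

section
/- Let K be an algebraically closed field and k ≥ 1. If X = (V₁, V₂, α, β) and Y = (W₁, W₂, γ, δ) are indecomposable finite-dimensional Λ_con-modules neither of which is simple (equivalently, all four vector spaces V₁, V₂, W₁, W₂ are nonzero), then there exists a nonzero morphism of representations X → Y. -/
/-- A finite-dimensional module over the contraction algebra `Λ_con` (the path algebra of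
the two-cycle quiver with arrows `a : 1 → 2`, `b : 2 → 1` modulo `(ab)^k a = 0` and
`b (ab)^k = 0`), given concretely as a representation `(V₁, V₂, α, β)` with
`α ∘ (β ∘ α)^k = 0` and `(β ∘ α)^k ∘ β = 0`. -/
structure LamRep (K : Type) [Field K] (k : ℕ) : Type 1 where
  V1 : Type
  V2 : Type
  [acg1 : AddCommGroup V1]
  [acg2 : AddCommGroup V2]
  [mod1 : Module K V1]
  [mod2 : Module K V2]
  [fd1 : FiniteDimensional K V1]
  [fd2 : FiniteDimensional K V2]
  α : V1 →ₗ[K] V2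
  β : V2 →ₗ[K] V1
  rel1 : α ∘ₗ ((β ∘ₗ α) ^ k) = 0
  rel2 : ((β ∘ₗ α) ^ k) ∘ₗ β = 0

attribute [instance] LamRep.acg1 LamRep.acg2 LamRep.mod1 LamRep.mod2 LamRep.fd1 LamRep.fd2

namespace LamRep

variable {K : Type} [Field K] {k : ℕ}

/-- A morphism of `Λ_con`-modules is a pair of linear maps commuting with the structure
maps. -/
def IsHom (M N : LamRep K k) (φ1 : M.V1 →ₗ[K] N.V1) (φ2 : M.V2 →ₗ[K] N.V2) : Prop :=
  φ2 ∘ₗ M.α = N.α ∘ₗ φ1 ∧ φ1 ∘ₗ M.β = N.β ∘ₗ φ2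

/-- An isomorphism of `Λ_con`-modules is a pair of linear isomorphisms commuting with the
structure maps. -/
def Iso (M N : LamRep K k) : Prop :=
  ∃ (φ1 : M.V1 ≃ₗ[K] N.V1) (φ2 : M.V2 ≃ₗ[K] N.V2),
    M.IsHom N (φ1 : M.V1 →ₗ[K] N.V1) (φ2 : M.V2 →ₗ[K] N.V2)

/-- The zero representation: both underlying vector spaces are trivial. -/
def IsZero (M : LamRep K k) : Prop := Subsingleton M.V1 ∧ Subsingleton M.V2

theorem prodMap_pow {V W : Type} [AddCommGroup V] [Module K V] [AddCommGroup W] [Module K W]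
    (f : V →ₗ[K] V) (g : W →ₗ[K] W) (n : ℕ) :
    (f.prodMap g) ^ n = (f ^ n).prodMap (g ^ n) := by
  induction n with
  | zero => ext <;> simp
  | succ n ih => rw [pow_succ, pow_succ, pow_succ, ih, LinearMap.prodMap_mul]

/-- The direct sum of two representations, taken componentwise. -/
def dsum (M N : LamRep K k) : LamRep K k where
  V1 := M.V1 × N.V1
  V2 := M.V2 × N.V2
  α := M.α.prodMap N.α
  β := M.β.prodMap N.β
  rel1 := by
    have h : (M.β.prodMap N.β) ∘ₗ (M.α.prodMap N.α) = (M.β ∘ₗ M.α).prodMap (N.β ∘ₗ N.α) :=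
      LinearMap.prodMap_comp _ _ _ _
    rw [h, prodMap_pow,
      show (M.α.prodMap N.α) ∘ₗ (((M.β ∘ₗ M.α) ^ k).prodMap ((N.β ∘ₗ N.α) ^ k)) =
        (M.α ∘ₗ ((M.β ∘ₗ M.α) ^ k)).prodMap (N.α ∘ₗ ((N.β ∘ₗ N.α) ^ k)) from
        LinearMap.prodMap_comp _ _ _ _, M.rel1, N.rel1, LinearMap.prodMap_zero]
  rel2 := by
    have h : (M.β.prodMap N.β) ∘ₗ (M.α.prodMap N.α) = (M.β ∘ₗ M.α).prodMap (N.β ∘ₗ N.α) :=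
      LinearMap.prodMap_comp _ _ _ _
    rw [h, prodMap_pow,
      show (((M.β ∘ₗ M.α) ^ k).prodMap ((N.β ∘ₗ N.α) ^ k)) ∘ₗ (M.β.prodMap N.β) =
        (((M.β ∘ₗ M.α) ^ k) ∘ₗ M.β).prodMap (((N.β ∘ₗ N.α) ^ k) ∘ₗ N.β) from
        LinearMap.prodMap_comp _ _ _ _, M.rel2, N.rel2, LinearMap.prodMap_zero]

/-- A representation is indecomposable if it is nonzero and not isomorphic to a direct sum
of two nonzero representations. -/
def Indecomposable (M : LamRep K k) : Prop :=
  ¬ M.IsZero ∧ ∀ N P : LamRep K k, M.Iso (N.dsum P) → N.IsZero ∨ P.IsZero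

/-- The endomorphism space of a representation, as a `K`-subspace of the product of the two
spaces of linear endomorphisms. -/
def endSpace (M : LamRep K k) :
    Submodule K ((M.V1 →ₗ[K] M.V1) × (M.V2 →ₗ[K] M.V2)) where
  carrier := {φ | M.IsHom M φ.1 φ.2}
  zero_mem' := by
    constructor <;> simp [LinearMap.zero_comp, LinearMap.comp_zero]
  add_mem' := by
    rintro φ ψ ⟨h1, h2⟩ ⟨h3, h4⟩
    constructor
    · simp only [Prod.fst_add, Prod.snd_add, LinearMap.add_comp, LinearMap.comp_add, h1, h3]
    · simp only [Prod.fst_add, Prod.snd_add, LinearMap.add_comp, LinearMap.comp_add, h2, h4]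
  smul_mem' := by
    rintro c φ ⟨h1, h2⟩
    constructor
    · simp only [Prod.smul_fst, Prod.smul_snd, LinearMap.smul_comp, LinearMap.comp_smul, h1]
    · simp only [Prod.smul_fst, Prod.smul_snd, LinearMap.smul_comp, LinearMap.comp_smul, h2]


variable (K)

/-- The simple module `S₁ = (K, 0, 0, 0)`. -/
def S1 : LamRep K k where
  V1 := K
  V2 := PUnit
  α := 0
  β := 0
  rel1 := by rw [LinearMap.zero_comp]
  rel2 := by rw [LinearMap.comp_zero]

/-- The simple module `S₂ = (0, K, 0, 0)`. -/
def S2 : LamRep K k where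
  V1 := PUnit
  V2 := K
  α := 0
  β := 0
  rel1 := by rw [LinearMap.zero_comp]
  rel2 := by rw [LinearMap.comp_zero]

/-- The module `M₁ = (K, K, id, 0)` (a representation whenever `k ≥ 1`). -/
def M1 (hk : 1 ≤ k) : LamRep K k where
  V1 := K
  V2 := K
  α := LinearMap.id
  β := 0
  rel1 := by
    rw [LinearMap.zero_comp, zero_pow (Nat.one_le_iff_ne_zero.mp hk), LinearMap.comp_zero]
  rel2 := by rw [LinearMap.comp_zero]

/-- The module `M₂ = (K, K, 0, id)` (a representation whenever `k ≥ 1`). -/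
def M2 (hk : 1 ≤ k) : LamRep K k where
  V1 := K
  V2 := K
  α := 0
  β := LinearMap.id
  rel1 := by rw [LinearMap.zero_comp]
  rel2 := by
    rw [LinearMap.comp_zero, zero_pow (Nat.one_le_iff_ne_zero.mp hk), LinearMap.zero_comp]

/-- The projective module `Q₁ = (K², K, α(s,t) = s, β(t) = (0,t))` for `k = 1`. -/
def Q1 : LamRep K 1 where
  V1 := K × K
  V2 := K
  α := LinearMap.fst K K K
  β := LinearMap.inr K K K
  rel1 := by ext <;> simp
  rel2 := by ext <;> simp

/-- The projective module `Q₂ = (K, K², α(t) = (0,t), β(s,t) = s)` for `k = 1`. -/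
def Q2 : LamRep K 1 where
  V1 := K
  V2 := K × K
  α := LinearMap.inr K K K
  β := LinearMap.fst K K K
  rel1 := by ext <;> simp
  rel2 := by ext <;> simp

end LamRep

/-!
If `X` is indecomposable with both spaces nonzero, then `α` and `β` cannot both vanish, and
nilpotency of `αβ` and `βα` turns this into: `range α ⊄ range (αβ)` or `range β ⊄ range (βα)`.
In the first case choose a functional `f` on `V₂` killing `range (αβ)` but not `range α`, and a
nonzero `w ∈ W₁` with `δγ w = 0` (it exists since `δγ` is nilpotent). Then
`φ₁ x = f (α x) • w`, `φ₂ y = f y • γ w` is a nonzero morphism `X → Y`; the second case is the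
same construction with the two vertices exchanged.
-/

open LinearMap

section LinearAlgebra

variable {K : Type*} [Field K]

theorem exists_ne_zero_apply_eq_zero_of_isNilpotent {V : Type*} [AddCommGroup V] [Module K V]
    [FiniteDimensional K V] [Nontrivial V] {f : Module.End K V} (hf : IsNilpotent f) :
    ∃ v ≠ 0, f v = 0 := by
  have hker : ker f ≠ ⊥ := (isUnit_iff_ker_eq_bot f).not.mp hf.not_isUnit
  obtain ⟨v, hv, hv0⟩ := Submodule.exists_mem_ne_zero_of_ne_bot hker
  exact ⟨v, hv0, hv⟩

theorem Submodule.eq_bot_of_le_map_of_isNilpotent {V : Type*} [AddCommGroup V] [Module K V]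
    {f : Module.End K V} (hf : IsNilpotent f) {p : Submodule K V} (hp : p ≤ p.map f) :
    p = ⊥ := by
  have hpow : ∀ n : ℕ, p ≤ p.map (f ^ n) := by
    intro n
    induction n with
    | zero => rw [pow_zero, Module.End.one_eq_id, Submodule.map_id]
    | succ n ih =>
      calc p ≤ p.map f := hp
        _ ≤ (p.map (f ^ n)).map f := Submodule.map_mono ih
        _ = p.map (f ^ (n + 1)) := by rw [pow_succ', Module.End.mul_eq_comp, Submodule.map_comp]
  obtain ⟨n, hn⟩ := hf
  simpa [hn] using hpow n

variable {V₁ V₂ W₁ W₂ : Type*} [AddCommGroup V₁] [Module K V₁] [AddCommGroup V₂] [Module K V₂]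
  [AddCommGroup W₁] [Module K W₁] [AddCommGroup W₂] [Module K W₂]

theorem comp_pow_succ (a : V₁ →ₗ[K] V₂) (b : V₂ →ₗ[K] V₁) (n : ℕ) :
    (a ∘ₗ b) ^ (n + 1) = a ∘ₗ ((b ∘ₗ a) ^ n) ∘ₗ b := by
  induction n with
  | zero => rfl
  | succ n ih =>
    rw [pow_succ, Module.End.mul_eq_comp, ih, pow_succ, Module.End.mul_eq_comp]
    rfl

theorem eq_zero_of_range_le_range_comp {a : V₁ →ₗ[K] V₂} {b : V₂ →ₗ[K] V₁}
    (hab : IsNilpotent (a ∘ₗ b)) (ha : range a ≤ range (a ∘ₗ b))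
    (hb : range b ≤ range (b ∘ₗ a)) : a = 0 := by
  have hle : range a ≤ (range a).map (a ∘ₗ b) :=
    calc range a ≤ (range b).map a := by rwa [← range_comp]
      _ ≤ ((range a).map b).map a := Submodule.map_mono (by rwa [← range_comp])
      _ = (range a).map (a ∘ₗ b) := by rw [Submodule.map_comp]
  exact range_eq_bot.mp (Submodule.eq_bot_of_le_map_of_isNilpotent hab hle)

theorem exists_dual_comp_eq_zero_and_comp_ne_zero {g : V₁ →ₗ[K] V₂} {h : W₁ →ₗ[K] V₂}
    (hgh : ¬ range g ≤ range h) : ∃ f : Module.Dual K V₂, f ∘ₗ h = 0 ∧ f ∘ₗ g ≠ 0 := by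
  obtain ⟨_, ⟨x, rfl⟩, hx⟩ := SetLike.not_le_iff_exists.mp hgh
  obtain ⟨f, hfx, hf⟩ := (range h).exists_dual_map_eq_bot_of_notMem hx inferInstance
  exact ⟨f, range_eq_bot.mp (by rwa [range_comp]), fun hfg => hfx (LinearMap.congr_fun hfg x)⟩

theorem exists_intertwiner_of_not_range_le_range_comp [FiniteDimensional K W₁] [Nontrivial W₁]
    {a : V₁ →ₗ[K] V₂} {b : V₂ →ₗ[K] V₁} {c : W₁ →ₗ[K] W₂} {d : W₂ →ₗ[K] W₁}
    (hab : ¬ range a ≤ range (a ∘ₗ b)) (hdc : IsNilpotent (d ∘ₗ c)) :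
    ∃ (φ₁ : V₁ →ₗ[K] W₁) (φ₂ : V₂ →ₗ[K] W₂),
      φ₂ ∘ₗ a = c ∘ₗ φ₁ ∧ φ₁ ∘ₗ b = d ∘ₗ φ₂ ∧ φ₁ ≠ 0 := by
  obtain ⟨f, hfab, hfa⟩ := exists_dual_comp_eq_zero_and_comp_ne_zero hab
  obtain ⟨w, hw0, hw⟩ := exists_ne_zero_apply_eq_zero_of_isNilpotent hdc
  refine ⟨(f ∘ₗ a).smulRight w, f.smulRight (c w), ?_, ?_, ?_⟩
  · ext x
    simp
  · ext y
    have hy : f (a (b y)) = 0 := LinearMap.congr_fun hfab y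
    have hw' : d (c w) = 0 := hw
    simp [hy, hw']
  · obtain ⟨x, hx⟩ := not_forall.mp fun h => hfa (ext h)
    refine ne_of_apply_ne (fun φ => φ x) ?_
    simpa using And.intro hx hw0

end LinearAlgebra

namespace LamRep

variable {K : Type} [Field K] {k : ℕ}

theorem isNilpotent_β_comp_α (M : LamRep K k) : IsNilpotent (M.β ∘ₗ M.α) :=
  ⟨k + 1, by rw [pow_succ, Module.End.mul_eq_comp, ← comp_assoc, M.rel2, zero_comp]⟩

theorem isNilpotent_α_comp_β (M : LamRep K k) : IsNilpotent (M.α ∘ₗ M.β) :=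
  ⟨k + 1, by rw [comp_pow_succ, ← comp_assoc, M.rel1, zero_comp]⟩

variable (K k) in
def single₁ (V : Type) [AddCommGroup V] [Module K V] [FiniteDimensional K V] : LamRep K k where
  V1 := V
  V2 := PUnit
  α := 0
  β := 0
  rel1 := zero_comp _
  rel2 := comp_zero _

variable (K k) in
def single₂ (V : Type) [AddCommGroup V] [Module K V] [FiniteDimensional K V] : LamRep K k where
  V1 := PUnit
  V2 := V
  α := 0
  β := 0
  rel1 := zero_comp _
  rel2 := comp_zero _

theorem iso_dsum_single_of_α_eq_zero_of_β_eq_zero {M : LamRep K k} (hα : M.α = 0)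
    (hβ : M.β = 0) : M.Iso ((single₁ K k M.V1).dsum (single₂ K k M.V2)) := by
  refine ⟨(LinearEquiv.prodUnique (M₂ := PUnit)).symm, (LinearEquiv.uniqueProd (M₂ := PUnit)).symm,
    ?_, ?_⟩ <;> ext <;> simp [dsum, single₁, single₂, hα, hβ] <;> rfl

theorem Indecomposable.α_ne_zero_or_β_ne_zero {M : LamRep K k} (hM : M.Indecomposable)
    [Nontrivial M.V1] [Nontrivial M.V2] : M.α ≠ 0 ∨ M.β ≠ 0 := by
  by_contra! h
  rcases hM.2 _ _ (iso_dsum_single_of_α_eq_zero_of_β_eq_zero h.1 h.2) with h₁ | h₂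
  · exact not_subsingleton M.V1 h₁.1
  · exact not_subsingleton M.V2 h₂.2

theorem Indecomposable.not_range_le_or_not_range_le {M : LamRep K k} (hM : M.Indecomposable)
    [Nontrivial M.V1] [Nontrivial M.V2] :
    ¬ range M.α ≤ range (M.α ∘ₗ M.β) ∨ ¬ range M.β ≤ range (M.β ∘ₗ M.α) := by
  by_contra! h
  rcases hM.α_ne_zero_or_β_ne_zero with hα | hβ
  · exact hα (eq_zero_of_range_le_range_comp M.isNilpotent_α_comp_β h.1 h.2)
  · exact hβ (eq_zero_of_range_le_range_comp M.isNilpotent_β_comp_α h.2 h.1)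

end LamRep

theorem nonzero_hom_between_nonsimple_indecomposables_general (K : Type) [Field K]
    (k : ℕ) (X Y : LamRep K k)
    (hX : X.Indecomposable)
    (hX1 : Nontrivial X.V1) (hX2 : Nontrivial X.V2)
    (hY1 : Nontrivial Y.V1) (hY2 : Nontrivial Y.V2) :
    ∃ (φ1 : X.V1 →ₗ[K] Y.V1) (φ2 : X.V2 →ₗ[K] Y.V2),
      X.IsHom Y φ1 φ2 ∧ ¬ (φ1 = 0 ∧ φ2 = 0) := by
  rcases hX.not_range_le_or_not_range_le with h | h
  · obtain ⟨φ1, φ2, hα, hβ, hφ1⟩ :=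
      exists_intertwiner_of_not_range_le_range_comp h Y.isNilpotent_β_comp_α
    exact ⟨φ1, φ2, ⟨hα, hβ⟩, fun h => hφ1 h.1⟩
  · obtain ⟨φ2, φ1, hβ, hα, hφ2⟩ :=
      exists_intertwiner_of_not_range_le_range_comp h Y.isNilpotent_α_comp_β
    exact ⟨φ1, φ2, ⟨hα, hβ⟩, fun h => hφ2 h.2⟩

/-- If `X` and `Y` are indecomposable finite-dimensional `Λ_con`-modules neither of
which is simple (equivalently, all four underlying vector spaces are nonzero), then there
is a nonzero morphism of representations `X → Y`. -/
theorem nonzero_hom_between_nonsimple_indecomposables (K : Type) [Field K] [IsAlgClosed K]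
    (k : ℕ) (hk : 1 ≤ k) (X Y : LamRep K k)
    (hX : X.Indecomposable) (hY : Y.Indecomposable)
    (hX1 : Nontrivial X.V1) (hX2 : Nontrivial X.V2)
    (hY1 : Nontrivial Y.V1) (hY2 : Nontrivial Y.V2) :
    ∃ (φ1 : X.V1 →ₗ[K] Y.V1) (φ2 : X.V2 →ₗ[K] Y.V2),
      X.IsHom Y φ1 φ2 ∧ ¬ (φ1 = 0 ∧ φ2 = 0) :=
  nonzero_hom_between_nonsimple_indecomposables_general K k X Y hX hX1 hX2 hY1 hY2
end
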